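/- arXiv:2210.02261 — 11 statements merged into one kernel-verified Lean document; each statement's English description precedes it below -/
import Mathlib

section
/- Let G be a group, H a subnormal subgroup of G, and K a subgroup of finite index in G. Then |HK:K| divides |G:K|. -/
/-- `H` is subnormal in `G` if there is a finite chain
`H = c 0 ⊴ c 1 ⊴ ... ⊴ c n = G` with each term normal in the next. -/
def IsSubnormal {G : Type*} [Group G] (H : Subgroup G) : Prop :=
  ∃ (n : ℕ) (c : Fin (n + 1) → Subgroup G),
    c 0 = H ∧ c (Fin.last n) = ⊤ ∧
    ∀ i : Fin n, c i.castSucc ≤ c i.succ ∧ ((c i.castSucc).subgroupOf (c i.succ)).Normal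

/-!
For `A ⊴ B`, the cosets of `A ∩ K` in `A` correspond to those of `B ∩ K` in the subgroup
`A (B ∩ K)` of `B`, so `|A : A ∩ K|` divides `|B : B ∩ K|`. Climbing a subnormal series from `H`
to `G` gives `|H : H ∩ K| ∣ |G : K|`.
-/

namespace Subgroup

open scoped Pointwise

variable {G : Type*} [Group G]

theorem quotientSubgroupOfEmbeddingOfLE_sup_surjective (H K : Subgroup G) [H.Normal] :
    Function.Surjective (quotientSubgroupOfEmbeddingOfLE K (le_sup_left : H ≤ H ⊔ K)) := by
  rintro ⟨z⟩
  obtain ⟨h, hh, k, hk, hz⟩ : z.1 ∈ (H : Set G) * (K : Set G) := by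
    rw [← normal_mul, SetLike.mem_coe]
    exact z.2
  refine ⟨QuotientGroup.mk ⟨h, hh⟩, QuotientGroup.eq.mpr ?_⟩
  simpa [mem_subgroupOf, ← hz] using hk

/-- Second isomorphism theorem at the level of cosets, with the normal subgroup on the left. -/
theorem relIndex_sup_of_normal_left (H K : Subgroup G) [H.Normal] :
    K.relIndex (H ⊔ K) = K.relIndex H :=
  (Nat.card_eq_of_bijective _
    ⟨(quotientSubgroupOfEmbeddingOfLE K le_sup_left).injective,
      quotientSubgroupOfEmbeddingOfLE_sup_surjective H K⟩).symm

theorem relIndex_dvd_index_of_normal_left (H K : Subgroup G) [H.Normal] :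
    K.relIndex H ∣ K.index :=
  relIndex_sup_of_normal_left H K ▸ relIndex_dvd_index_of_le le_sup_right

theorem relIndex_dvd_relIndex_of_normal_subgroupOf (K : Subgroup G) {A B : Subgroup G}
    (hAB : A ≤ B) [(A.subgroupOf B).Normal] : K.relIndex A ∣ K.relIndex B := by
  rw [← relIndex_subgroupOf hAB]
  exact relIndex_dvd_index_of_normal_left (A.subgroupOf B) (K.subgroupOf B)

end Subgroup

/-- `|HK:K| = |H : H ∩ K|` is `K.relIndex H`. -/
theorem relindex_dvd_index_of_subnormal_general {G : Type*} [Group G] (H K : Subgroup G)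
    (hH : IsSubnormal H) :
    K.relIndex H ∣ K.index := by
  obtain ⟨n, c, rfl, hlast, hstep⟩ := hH
  suffices ∀ i : Fin (n + 1), K.relIndex (c i) ∣ K.index from this 0
  intro i
  induction i using Fin.reverseInduction with
  | last => rw [hlast, Subgroup.relIndex_top_right]
  | cast i ih =>
    have := (hstep i).2
    exact (K.relIndex_dvd_relIndex_of_normal_subgroupOf (hstep i).1).trans ih

/-- If `H` is subnormal in `G` and `K ≤ G` has finite index, then `|HK:K|` divides `|G:K|`.
Here `|HK:K| = |H : H ∩ K|` is `K.relindex H`. -/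
theorem relindex_dvd_index_of_subnormal {G : Type*} [Group G] (H K : Subgroup G)
    (hH : IsSubnormal H) (hK : K.index ≠ 0) :
    K.relIndex H ∣ K.index :=
  relindex_dvd_index_of_subnormal_general H K hH
end

section
/- Let G be a finite group, H ≤ G a subgroup, and p a prime. Then H is p-subnormal in G if and only if |HP| divides |G| for every Sylow p-subgroup P of G. -/
open scoped Pointwise

/-!
Writing `|HP| = |P| · [H : H ∩ P]` and `|G| = |P| · [G : P]`, the condition `|HP| ∣ |G|` becomes
`[H : H ∩ P] ∣ [G : P]`. As `[H : H ∩ P]` divides `|G|`, is coprime to `|P|` exactly when `p` does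
not divide it, and `p ∤ [G : P]`, this holds iff `p ∤ [H : H ∩ P]`, i.e. iff the `p`-subgroup
`H ∩ P` is a Sylow subgroup of `H`.
-/

/-- `H` is `p`-subnormal in `G` if `H ∩ P` is a Sylow `p`-subgroup of `H` for every
Sylow `p`-subgroup `P` of `G`. -/
def IsPSubnormal {G : Type*} [Group G] (p : ℕ) [Fact p.Prime] (H : Subgroup G) : Prop :=
  ∀ P : Sylow p G, ∃ Q : Sylow p H, (Q : Subgroup H) = ((P : Subgroup G) ⊓ H).subgroupOf H

namespace Subgroup

variable {G : Type*} [Group G]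

/-- `HK/K` is the `H`-orbit of the trivial coset, whose stabilizer in `H` is `H ∩ K`. -/
theorem card_image_mk_eq_index_subgroupOf (H K : Subgroup G) :
    Nat.card ((H : Set G).image ((↑) : G → G ⧸ K)) = (K.subgroupOf H).index := by
  have hsmul (h : H) : h • ((1 : G) : G ⧸ K) = (h : G) :=
    congrArg QuotientGroup.mk (mul_one (h : G))
  have hstab : MulAction.stabilizer H ((1 : G) : G ⧸ K) = K.subgroupOf H := by
    ext h
    simp [hsmul, mem_subgroupOf, QuotientGroup.eq]
  have horbit : MulAction.orbit H ((1 : G) : G ⧸ K) = (H : Set G).image ((↑) : G → G ⧸ K) := by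
    ext x
    simp [MulAction.mem_orbit_iff, hsmul]
  rw [← hstab, MulAction.index_stabilizer, horbit, Nat.card_coe_set_eq]

theorem card_mul_eq_card_mul_index_subgroupOf (H K : Subgroup G) :
    Nat.card ((H : Set G) * (K : Set G)) = Nat.card K * (K.subgroupOf H).index := by
  rw [card_mul_eq_card_subgroup_mul_card_quotient, card_image_mk_eq_index_subgroupOf]

end Subgroup

section Sylow

variable {G : Type*} [Group G] {p : ℕ} [hp : Fact p.Prime]

theorem exists_sylow_coe_eq_iff {S : Subgroup G} [S.FiniteIndex] :
    (∃ Q : Sylow p G, (Q : Subgroup G) = S) ↔ IsPGroup p S ∧ ¬ p ∣ S.index := by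
  constructor
  · rintro ⟨Q, rfl⟩
    exact ⟨Q.isPGroup', Q.not_dvd_index⟩
  · rintro ⟨hS, hindex⟩
    exact ⟨hS.toSylow hindex, rfl⟩

theorem Sylow.dvd_index_iff_not_dvd [Finite G] (P : Sylow p G) {n : ℕ} (hn : n ∣ Nat.card G) :
    n ∣ (P : Subgroup G).index ↔ ¬ p ∣ n := by
  refine ⟨fun h hpn => P.not_dvd_index (hpn.trans h), fun hpn => ?_⟩
  obtain ⟨k, hk⟩ := P.isPGroup'.exists_card_eq
  have hcop : n.Coprime (Nat.card P) := hk ▸ hp.out.coprime_pow_of_not_dvd hpn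
  rw [← (P : Subgroup G).card_mul_index] at hn
  exact hcop.dvd_of_dvd_mul_left hn

end Sylow

/-- In a finite group `G`, a subgroup `H` is `p`-subnormal iff the cardinality of the
product set `HP` divides `|G|` for every Sylow `p`-subgroup `P` of `G`. -/
theorem isPSubnormal_iff_card_mul_dvd {G : Type*} [Group G] [Finite G]
    (H : Subgroup G) (p : ℕ) [Fact p.Prime] :
    IsPSubnormal p H ↔
      ∀ P : Sylow p G, Nat.card ↥((H : Set G) * ((P : Subgroup G) : Set G)) ∣ Nat.card G := by
  refine forall_congr' fun P => ?_
  have hindex_dvd : ((P : Subgroup G).subgroupOf H).index ∣ Nat.card G :=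
    (Subgroup.index_dvd_card _).trans H.card_subgroup_dvd_card
  rw [Subgroup.inf_subgroupOf_right, exists_sylow_coe_eq_iff,
    Subgroup.card_mul_eq_card_mul_index_subgroupOf, ← (P : Subgroup G).card_mul_index,
    mul_dvd_mul_iff_left Nat.card_pos.ne', P.dvd_index_iff_not_dvd hindex_dvd]
  exact and_iff_right P.isPGroup'.comap_subtype
end

section
/- Let G be a finite group and H ≤ G a subgroup. If |HP| divides |G| for every Sylow subgroup P of G (Sylow p-subgroups for every prime p), then |HK| divides |G| for every subgroup K ≤ G. -/
open scoped Pointwise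

/-- Product formula: `|HK| * |H ⊓ K| = |H| * |K|`. -/
private lemma card_mul_inf {G : Type*} [Group G] [Finite G] (H K : Subgroup G) :
    Nat.card ↥((H : Set G) * (K : Set G)) * Nat.card ↥(H ⊓ K) =
      Nat.card H * Nat.card K := by
  classical
  let f : ↥H → G ⧸ K := fun h => QuotientGroup.mk (h : G)
  have hker : Setoid.ker f = QuotientGroup.leftRel (K.subgroupOf H) := by
    ext x y
    change f x = f y ↔ _
    rw [QuotientGroup.leftRel_apply]
    simp only [f, QuotientGroup.eq, Subgroup.mem_subgroupOf, Subgroup.coe_mul,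
      Subgroup.coe_inv]
  have hrange : Set.range f = ((H : Set G).image (QuotientGroup.mk : G → G ⧸ K)) := by
    rw [Set.image_eq_range]
    rfl
  have e1 : Nat.card (↥H ⧸ K.subgroupOf H)
      = Nat.card ((H : Set G).image (QuotientGroup.mk : G → G ⧸ K)) := by
    rw [← hrange]
    refine Nat.card_congr ?_
    refine (Quotient.congrRight ?_).trans (Setoid.quotientKerEquivRange f)
    intro a b
    rw [hker]
  have e2 : Nat.card (K.subgroupOf H) = Nat.card ↥(H ⊓ K) := by
    rw [inf_comm]
    calc Nat.card (K.subgroupOf H)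
        = Nat.card ((K.subgroupOf H).map H.subtype) :=
          Nat.card_congr ((K.subgroupOf H).equivMapOfInjective H.subtype
            H.subtype_injective).toEquiv
      _ = Nat.card ↥(K ⊓ H) := by rw [Subgroup.subgroupOf_map_subtype]
  have e3 : Nat.card H = Nat.card (↥H ⧸ K.subgroupOf H) * Nat.card (K.subgroupOf H) :=
    Subgroup.card_eq_card_quotient_mul_card_subgroup _
  have e4 := Subgroup.card_mul_eq_card_subgroup_mul_card_quotient K (H : Set G)
  rw [e4, e3, e1, e2]
  ring

/-- If a subgroup `S` whose order is the full `p`-part of `|T|` satisfies `S ≤ T ⊓ P` with `P`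
a `p`-group, then `|T ⊓ P|` is the `p`-part of `|T|`. -/
private lemma inf_card_eq {G : Type*} [Group G] [Finite G] {p : ℕ} [Fact p.Prime]
    {S T P : Subgroup G} (hP : IsPGroup p P) (hST : S ≤ T) (hSP : S ≤ P)
    (hcard : Nat.card S = p ^ (Nat.card T).factorization p) :
    Nat.card ↥(T ⊓ P) = p ^ (Nat.card T).factorization p := by
  have hp : p.Prime := Fact.out
  obtain ⟨n, hn⟩ := IsPGroup.iff_card.mp (hP.to_le inf_le_right)
  have h1 : Nat.card ↥(T ⊓ P) ∣ Nat.card T := Subgroup.card_dvd_of_le inf_le_left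
  have h2 : Nat.card S ∣ Nat.card ↥(T ⊓ P) := Subgroup.card_dvd_of_le (le_inf hST hSP)
  rw [hn] at h1 h2 ⊢
  rw [hcard] at h2
  have hT : Nat.card T ≠ 0 := Nat.card_pos.ne'
  have hle : n ≤ (Nat.card T).factorization p :=
    (Nat.Prime.pow_dvd_iff_le_factorization hp hT).mp h1
  have hge : (Nat.card T).factorization p ≤ n :=
    (Nat.pow_dvd_pow_iff_le_right hp.one_lt).mp h2
  rw [Nat.le_antisymm hle hge]

private lemma card_prod_ne_zero {G : Type*} [Group G] [Finite G] (H K : Subgroup G) :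
    Nat.card ↥((H : Set G) * (K : Set G)) ≠ 0 := by
  have : Nonempty ↥((H : Set G) * (K : Set G)) :=
    ⟨⟨1, ⟨1, H.one_mem, 1, K.one_mem, mul_one 1⟩⟩⟩
  exact Nat.card_pos.ne'

/-- If `|HP|` divides `|G|` for every Sylow `p`-subgroup `P` of the finite group `G`
(for every prime `p`), then `|HK|` divides `|G|` for every subgroup `K ≤ G`. -/
theorem card_mul_dvd_of_forall_sylow {G : Type*} [Group G] [Finite G] (H : Subgroup G)
    (h : ∀ (p : ℕ) [Fact p.Prime] (P : Sylow p G),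
      Nat.card ↥((H : Set G) * ((P : Subgroup G) : Set G)) ∣ Nat.card G) :
    ∀ K : Subgroup G, Nat.card ↥((H : Set G) * (K : Set G)) ∣ Nat.card G := by
  intro K
  have hG : Nat.card G ≠ 0 := Nat.card_pos.ne'
  have hne : Nat.card ↥((H : Set G) * (K : Set G)) ≠ 0 := card_prod_ne_zero H K
  rw [← Nat.factorization_le_iff_dvd hne hG, Finsupp.le_def]
  intro p
  by_cases hp : p.Prime
  swap
  · simp [Nat.factorization_eq_zero_of_not_prime _ hp]
  haveI : Fact p.Prime := ⟨hp⟩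
  -- notation for the relevant p-parts
  set wH := (Nat.card H).factorization p with hwH
  set wK := (Nat.card K).factorization p with hwK
  set wI := (Nat.card ↥(H ⊓ K)).factorization p with hwI
  set a := (Nat.card G).factorization p with ha
  -- Step 1: a Sylow p-subgroup R' of H ⊓ K (as a subgroup of G)
  obtain ⟨R⟩ := (inferInstance : Nonempty (Sylow p ↥(H ⊓ K)))
  set R' : Subgroup G := (R : Subgroup ↥(H ⊓ K)).map (H ⊓ K).subtype with hR'def
  have hR'card : Nat.card R' = p ^ wI := by
    rw [← Nat.card_congr ((R : Subgroup ↥(H ⊓ K)).equivMapOfInjective (H ⊓ K).subtype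
      (H ⊓ K).subtype_injective).toEquiv]
    exact R.card_eq_multiplicity
  have hR'le : R' ≤ H ⊓ K := Subgroup.map_subtype_le _
  -- Step 2: a Sylow p-subgroup Q of K containing R'
  have hR''card : Nat.card (R'.subgroupOf K) = Nat.card R' :=
    Nat.card_congr (Subgroup.subgroupOfEquivOfLe (hR'le.trans inf_le_right)).toEquiv
  have hR'' : IsPGroup p (R'.subgroupOf K) :=
    IsPGroup.iff_card.mpr ⟨wI, by rw [hR''card, hR'card]⟩
  obtain ⟨Qh, hQh⟩ := hR''.exists_le_sylow
  set Q : Subgroup G := (Qh : Subgroup ↥K).map K.subtype with hQdef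
  have hQcard : Nat.card Q = p ^ wK := by
    rw [← Nat.card_congr ((Qh : Subgroup ↥K).equivMapOfInjective K.subtype
      K.subtype_injective).toEquiv]
    exact Qh.card_eq_multiplicity
  have hQp : IsPGroup p Q := Qh.isPGroup'.map _
  have hQle : Q ≤ K := Subgroup.map_subtype_le _
  have hR'Q : R' ≤ Q := by
    have h := Subgroup.map_mono (f := K.subtype) hQh
    rwa [Subgroup.subgroupOf_map_subtype,
      inf_eq_left.mpr (hR'le.trans inf_le_right)] at h
  -- Step 3: a Sylow p-subgroup P of G containing Q
  obtain ⟨P, hQP⟩ := hQp.exists_le_sylow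
  -- Step 4: the three intersections with P have full p-part
  have hKP : Nat.card ↥(K ⊓ P) = p ^ wK :=
    inf_card_eq P.isPGroup' hQle hQP hQcard
  have hIKP : Nat.card ↥((H ⊓ K) ⊓ P) = p ^ wI :=
    inf_card_eq P.isPGroup' hR'le (hR'Q.trans hQP) hR'card
  have hHP : Nat.card ↥(H ⊓ P) = p ^ wH := by
    obtain ⟨m, hm⟩ := IsPGroup.iff_card.mp (P.isPGroup'.to_le inf_le_right)
    have h1 : Nat.card ↥(H ⊓ (P : Subgroup G)) ∣ Nat.card H :=
      Subgroup.card_dvd_of_le inf_le_left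
    rw [hm] at h1
    have hH : Nat.card H ≠ 0 := Nat.card_pos.ne'
    have hle : m ≤ wH := (Nat.Prime.pow_dvd_iff_le_factorization hp hH).mp h1
    -- the other inequality comes from the hypothesis for P
    have hprod := card_mul_inf H (P : Subgroup G)
    have hdvd := h p P
    have hfle : (Nat.card ↥((H : Set G) * ((P : Subgroup G) : Set G))).factorization p ≤ a := by
      rw [ha]
      exact (Nat.factorization_le_iff_dvd (card_prod_ne_zero H _) hG).mpr hdvd p
    have hPcard : Nat.card ↥(P : Subgroup G) = p ^ a := P.card_eq_multiplicity
    have hfact := congrArg (fun n => n.factorization p) hprod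
    beta_reduce at hfact
    rw [Nat.factorization_mul (card_prod_ne_zero H _) Nat.card_pos.ne',
      Nat.factorization_mul hH Nat.card_pos.ne'] at hfact
    simp only [Finsupp.add_apply] at hfact
    rw [hm, hPcard] at hfact
    simp only [hp.factorization_pow, Finsupp.single_eq_same] at hfact
    -- hfact : card(HP).factorization p + m = wH + a
    have hge : wH ≤ m := by omega
    rw [hm, Nat.le_antisymm hle hge]
  -- Step 5: box the products of intersections inside P
  have hABsub : ((H ⊓ (P : Subgroup G) : Subgroup G) : Set G) *
      ((K ⊓ (P : Subgroup G) : Subgroup G) : Set G) ⊆ ((P : Subgroup G) : Set G) := by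
    apply Submonoid.mul_subset (S := (P : Subgroup G).toSubmonoid)
    · exact fun x hx => (inf_le_right : H ⊓ (P : Subgroup G) ≤ P) hx
    · exact fun x hx => (inf_le_right : K ⊓ (P : Subgroup G) ≤ P) hx
  have hABle : Nat.card ↥(((H ⊓ (P : Subgroup G) : Subgroup G) : Set G) *
      ((K ⊓ (P : Subgroup G) : Subgroup G) : Set G)) ≤ p ^ a := by
    have := Nat.card_mono (Set.toFinite _) hABsub
    rwa [show Nat.card ↥(((P : Subgroup G) : Set G)) = p ^ a from P.card_eq_multiplicity]
      at this
  have hABinf : (H ⊓ (P : Subgroup G)) ⊓ (K ⊓ (P : Subgroup G)) = (H ⊓ K) ⊓ P := by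
    rw [inf_inf_inf_comm, inf_idem]
  have hABprod := card_mul_inf (H ⊓ (P : Subgroup G)) (K ⊓ (P : Subgroup G))
  rw [hABinf, hIKP, hHP, hKP] at hABprod
  -- hABprod : card(A*B) * p^wI = p^wH * p^wK
  have key : wH + wK ≤ a + wI := by
    have : p ^ (wH + wK) ≤ p ^ (a + wI) := by
      rw [pow_add, pow_add, ← hABprod]
      exact Nat.mul_le_mul_right _ hABle
    exact (Nat.pow_le_pow_iff_right hp.one_lt).mp this
  -- Step 6: conclude
  have hHK := card_mul_inf H K
  have hfact := congrArg (fun n => n.factorization p) hHK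
  beta_reduce at hfact
  rw [Nat.factorization_mul hne Nat.card_pos.ne',
    Nat.factorization_mul Nat.card_pos.ne' Nat.card_pos.ne'] at hfact
  simp only [Finsupp.add_apply] at hfact
  -- hfact : card(HK).factorization p + wI = wH + wK
  omega
end

section
/- Let G be a finite group and H ≤ G a nilpotent subgroup. If |HP| divides |G| for every Sylow subgroup P of G (Sylow p-subgroups for every prime p), then H is subnormal in G. -/
open scoped Pointwise

namespace Subgroup

variable {G : Type*} [Group G]

theorem card_mul_eq_card_mul_relIndex (H K : Subgroup G) :
    Nat.card ((H : Set G) * (K : Set G)) = Nat.card K * K.relIndex H := by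
  -- `HK / K` is the `H`-orbit of the coset `K`, whose stabilizer is `H ∩ K`.
  have smul_one (h : H) : h • ((1 : G) : G ⧸ K) = ((h : G) : G ⧸ K) := by
    change (h : G) • ((1 : G) : G ⧸ K) = _
    rw [MulAction.Quotient.smul_mk, smul_eq_mul, mul_one]
  have hstab : MulAction.stabilizer H ((1 : G) : G ⧸ K) = K.subgroupOf H := by
    ext h
    rw [MulAction.mem_stabilizer_iff, smul_one, eq_comm, QuotientGroup.eq, mem_subgroupOf]
    simp
  rw [card_mul_eq_card_subgroup_mul_card_quotient, relIndex, ← hstab,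
    MulAction.index_stabilizer, ← Nat.card_coe_set_eq]
  congr 3
  ext x
  simp [MulAction.mem_orbit_iff, smul_one]

theorem eq_top_of_forall_exists_sylow_le [Finite G] {K : Subgroup G}
    (h : ∀ p ∈ (Nat.card G).primeFactors, ∃ P : Sylow p G, (P : Subgroup G) ≤ K) :
    K = ⊤ := by
  rw [← index_eq_one, Nat.eq_one_iff_not_exists_prime_dvd]
  intro p hp hdvd
  have := Fact.mk hp
  obtain ⟨P, hPK⟩ := h p (Nat.mem_primeFactors.mpr ⟨hp, hdvd.trans K.index_dvd_card,
    Nat.card_pos.ne'⟩)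
  exact P.not_dvd_index (hdvd.trans (index_dvd_of_le hPK))

theorem isNilpotent_iSup_of_commute {ι : Type*} [Finite ι] {K : ι → Subgroup G}
    [∀ i, Group.IsNilpotent (K i)]
    (hcomm : Pairwise fun i j => ∀ x y : G, x ∈ K i → y ∈ K j → Commute x y) :
    Group.IsNilpotent (⨆ i, K i : Subgroup G) := by
  cases nonempty_fintype ι
  rw [← noncommPiCoprod_range (hcomm := hcomm)]
  exact Group.nilpotent_of_surjective _ (noncommPiCoprod hcomm).rangeRestrict_surjective

theorem upperCentralSeries_succ_le_normalizer {H : Subgroup G} {j : ℕ}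
    (hH : upperCentralSeries G j ≤ H) : upperCentralSeries G (j + 1) ≤ normalizer H :=
  le_normalizer_iff_commutator_le_right.mpr <|
    (commutator_mono le_rfl le_top).trans ((commutator_upperCentralSeries_top_le G j).trans hH)

theorem isSubnormal_of_isNilpotent [Group.IsNilpotent G] (H : Subgroup G) : H.IsSubnormal := by
  suffices ∀ j ≤ Group.nilpotencyClass G, ∀ K : Subgroup G,
      upperCentralSeries G j ≤ K → K.IsSubnormal from this 0 (Nat.zero_le _) H (by simp)
  intro j hj
  induction hj using Nat.decreasingInduction with
  | self =>
    intro K hK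
    rw [upperCentralSeries_nilpotencyClass, top_le_iff] at hK
    exact hK ▸ IsSubnormal.top
  | of_succ j _ ih =>
    intro K hK
    refine IsSubnormal.step K (K ⊔ upperCentralSeries G (j + 1)) le_sup_left
      (ih _ le_sup_right) ?_
    rw [normal_subgroupOf_iff_le_normalizer le_sup_left]
    exact sup_le le_normalizer (upperCentralSeries_succ_le_normalizer hK)

end Subgroup

namespace Sylow

variable {G : Type*} [Group G] {p : ℕ}

theorem relIndex_dvd_index_of_card_mul_dvd [Finite G] (P : Sylow p G) {H : Subgroup G}
    (h : Nat.card ((H : Set G) * ((P : Subgroup G) : Set G)) ∣ Nat.card G) :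
    (P : Subgroup G).relIndex H ∣ (P : Subgroup G).index := by
  rw [Subgroup.card_mul_eq_card_mul_relIndex, ← Subgroup.card_mul_index (P : Subgroup G)] at h
  exact Nat.dvd_of_mul_dvd_mul_left Nat.card_pos h

theorem exists_eq_subgroupOf_of_not_dvd_relIndex [Fact p.Prime] (P : Sylow p G)
    {H : Subgroup G} (h : ¬ p ∣ (P : Subgroup G).relIndex H) :
    ∃ R : Sylow p H, (R : Subgroup H) = (P : Subgroup G).subgroupOf H :=
  ⟨(P.isPGroup'.comap_of_injective H.subtype H.subtype_injective).toSylow h, rfl⟩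

theorem exists_eq_subgroupOf_of_card_mul_dvd [Finite G] [Fact p.Prime] (P : Sylow p G)
    {H : Subgroup G} (h : Nat.card ((H : Set G) * ((P : Subgroup G) : Set G)) ∣ Nat.card G) :
    ∃ R : Sylow p H, (R : Subgroup H) = (P : Subgroup G).subgroupOf H :=
  P.exists_eq_subgroupOf_of_not_dvd_relIndex fun hp =>
    P.not_dvd_index (hp.trans (P.relIndex_dvd_index_of_card_mul_dvd h))

end Sylow

section FittingSubgroup

variable {G : Type*} [Group G] {p : ℕ}

def pCore (p : ℕ) (G : Type*) [Group G] : Subgroup G :=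
  ⨅ P : Sylow p G, (P : Subgroup G)

instance : (pCore p G).Normal where
  conj_mem x hx g := by
    refine Subgroup.mem_iInf.mpr fun P => ?_
    have hx' := Subgroup.mem_iInf.mp hx (g⁻¹ • P)
    rw [Sylow.coe_subgroup_smul, Subgroup.mem_pointwise_smul_iff_inv_smul_mem] at hx'
    simpa [MulAut.conj] using hx'

theorem isPGroup_pCore [Fact p.Prime] : IsPGroup p (pCore p G) :=
  (default : Sylow p G).isPGroup'.to_le (iInf_le _ _)

theorem inf_le_pCore_of_forall_card_mul_dvd [Finite G] [Fact p.Prime] {H : Subgroup G}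
    [Group.IsNilpotent H]
    (h : ∀ P : Sylow p G, Nat.card ((H : Set G) * ((P : Subgroup G) : Set G)) ∣ Nat.card G)
    (P : Sylow p G) : (P : Subgroup G) ⊓ H ≤ pCore p G := by
  rintro x ⟨hxP, hxH⟩
  refine Subgroup.mem_iInf.mpr fun Q => ?_
  obtain ⟨R, hR⟩ := P.exists_eq_subgroupOf_of_card_mul_dvd (h P)
  obtain ⟨S, hS⟩ := Q.exists_eq_subgroupOf_of_card_mul_dvd (h Q)
  have : Unique (Sylow p H) := Sylow.unique_of_normal R inferInstance
  have hx : (⟨x, hxH⟩ : H) ∈ (P : Subgroup G).subgroupOf H := hxP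
  rwa [← hR, Subsingleton.elim R S, hS] at hx

-- For infinite `G`, `Nat.card G = 0` has no prime factors and this is `⊥`.
def fittingSubgroup (G : Type*) [Group G] : Subgroup G :=
  ⨆ p : (Nat.card G).primeFactors, pCore p G

instance : (fittingSubgroup G).Normal :=
  Subgroup.iSup_normal _

instance [Finite G] : Group.IsNilpotent (fittingSubgroup G) := by
  have (p : (Nat.card G).primeFactors) : Fact (p : ℕ).Prime :=
    ⟨Nat.prime_of_mem_primeFactors p.2⟩
  have (p : (Nat.card G).primeFactors) : Group.IsNilpotent (pCore p G) :=
    isPGroup_pCore.isNilpotent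
  refine Subgroup.isNilpotent_iSup_of_commute fun p q hpq =>
    Subgroup.commute_of_normal_of_disjoint _ _ inferInstance inferInstance ?_
  exact IsPGroup.disjoint_of_ne p q (Subtype.coe_injective.ne hpq) _ _ isPGroup_pCore
    isPGroup_pCore

theorem le_fittingSubgroup_of_forall_card_mul_dvd [Finite G] {H : Subgroup G}
    [Group.IsNilpotent H]
    (h : ∀ (p : ℕ) [Fact p.Prime] (P : Sylow p G),
      Nat.card ((H : Set G) * ((P : Subgroup G) : Set G)) ∣ Nat.card G) :
    H ≤ fittingSubgroup G := by
  rw [← Subgroup.subgroupOf_eq_top]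
  refine Subgroup.eq_top_of_forall_exists_sylow_le fun p hp => ?_
  have := Fact.mk (Nat.prime_of_mem_primeFactors hp)
  have hpG : p ∈ (Nat.card G).primeFactors :=
    Nat.primeFactors_mono (Subgroup.card_subgroup_dvd_card H) Nat.card_pos.ne' hp
  obtain ⟨R, hR⟩ := (default : Sylow p G).exists_eq_subgroupOf_of_card_mul_dvd (h p _)
  refine ⟨R, hR.trans_le fun x hx => ?_⟩
  exact le_iSup (fun q : (Nat.card G).primeFactors => pCore q G) ⟨p, hpG⟩ <|
    inf_le_pCore_of_forall_card_mul_dvd (h p) default ⟨hx, x.2⟩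

end FittingSubgroup

theorem isSubnormal_of_subgroup_isSubnormal {G : Type*} [Group G] {H : Subgroup G}
    (hH : H.IsSubnormal) : IsSubnormal H := by
  obtain ⟨n, c, hmono, hnormal, hc0, hcn⟩ := Subgroup.IsSubnormal.isSubnormal_iff.mp hH
  exact ⟨n, fun i => c i, hc0, hcn, fun i => ⟨hmono (Nat.le_succ i), hnormal i⟩⟩

/-- Kegel–Wielandt for nilpotent subgroups: if `H` is a nilpotent subgroup of the finite
group `G` and `|HP|` divides `|G|` for every Sylow subgroup `P` of `G`, then `H` is
subnormal in `G`. -/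
theorem isSubnormal_of_nilpotent_of_forall_sylow {G : Type*} [Group G] [Finite G]
    (H : Subgroup G) (hnil : Group.IsNilpotent H)
    (h : ∀ (p : ℕ) [Fact p.Prime] (P : Sylow p G),
      Nat.card ↥((H : Set G) * ((P : Subgroup G) : Set G)) ∣ Nat.card G) :
    IsSubnormal H := by
  have hHF : H ≤ fittingSubgroup G := le_fittingSubgroup_of_forall_card_mul_dvd h
  exact isSubnormal_of_subgroup_isSubnormal <| Subgroup.IsSubnormal.trans hHF
    (Subgroup.isSubnormal_of_isNilpotent _) (Subgroup.Normal.isSubnormal inferInstance)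
end

section
/- Let G be a finite group and H ≤ G a subgroup whose characteristic core is trivial, i.e. the only characteristic subgroup of G contained in H is the trivial subgroup. Then H is exponential in G if and only if |G:H| is a multiple of the exponent of G. -/
/-- A subgroup `H ≤ G` is exponential if it has finite index and `x ^ |G:H| ∈ H`
for every `x ∈ G`. -/
def IsExponential {G : Type*} [Group G] (H : Subgroup G) : Prop :=
  H.index ≠ 0 ∧ ∀ x : G, x ^ H.index ∈ H

/-- If the only characteristic subgroup of the finite group `G` contained in `H` is
trivial, then `H` is exponential in `G` iff `|G:H|` is a multiple of the exponent of `G`. -/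
theorem isExponential_iff_exponent_dvd {G : Type*} [Group G] [Finite G] (H : Subgroup G)
    (hcore : ∀ K : Subgroup G, K.Characteristic → K ≤ H → K = ⊥) :
    IsExponential H ↔ Monoid.exponent G ∣ H.index := by
  constructor
  · rintro ⟨hne, hpow⟩
    set n := H.index
    set K : Subgroup G := Subgroup.closure {x | ∃ g : G, g ^ n = x} with hK
    have hchar : K.Characteristic := by
      constructor
      intro φ
      rw [hK]
      have : ∀ ψ : G ≃* G, Subgroup.closure {x | ∃ g : G, g ^ n = x} ≤
          (Subgroup.closure {x | ∃ g : G, g ^ n = x}).comap ψ.toMonoidHom := by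
        intro ψ
        rw [Subgroup.closure_le]
        rintro x ⟨g, rfl⟩
        simp only [Subgroup.coe_comap, Set.mem_preimage, SetLike.mem_coe,
          MulEquiv.coe_toMonoidHom, map_pow]
        exact Subgroup.subset_closure ⟨ψ g, rfl⟩
      refine le_antisymm ?_ (this φ)
      intro x hx
      have h2 := this φ.symm (Subgroup.mem_comap.mp hx)
      simpa using h2
    have hle : K ≤ H := by
      rw [hK, Subgroup.closure_le]
      rintro x ⟨g, rfl⟩
      exact hpow g
    have hbot := hcore K hchar hle
    have hall : ∀ g : G, g ^ n = 1 := by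
      intro g
      have : (g ^ n) ∈ K := Subgroup.subset_closure ⟨g, rfl⟩
      rw [hbot] at this
      simpa using this
    exact Monoid.exponent_dvd_of_forall_pow_eq_one hall
  · intro hdvd
    refine ⟨H.index_ne_zero_of_finite, fun x => ?_⟩
    obtain ⟨c, hc⟩ := hdvd
    rw [hc, pow_mul, Monoid.pow_exponent_eq_one, one_pow]
    exact H.one_mem
end

section
/- Let G be a finite group and H ≤ G a Hall subgroup. If H is exponential in G, then H is normal in G. -/
/-- An exponential Hall subgroup of a finite group is normal. -/
theorem normal_of_isExponential_hall {G : Type*} [Group G] [Finite G] (H : Subgroup G)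
    (hhall : Nat.Coprime (Nat.card H) H.index) (hexp : IsExponential H) :
    H.Normal := by
  constructor
  intro h hh g
  set n := H.index with hn
  set x := g * h * g⁻¹ with hx
  have hxn : x ^ n ∈ H := hexp.2 x
  set d := orderOf x with hd
  have hod : d = orderOf h := by
    refine SemiconjBy.orderOf_eq g⁻¹ ?_
    show g⁻¹ * (g * h * g⁻¹) = h * g⁻¹
    group
  have hdvd : orderOf h ∣ Nat.card H := by
    have := orderOf_dvd_natCard (⟨h, hh⟩ : H)
    rwa [Subgroup.orderOf_mk] at this
  have hcop : Nat.Coprime n d := by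
    rw [hod]
    exact (Nat.Coprime.coprime_dvd_left hdvd hhall).symm
  -- Bezout: 1 = n * a + d * b over ℤ
  have hbez : (1 : ℤ) = n * Nat.gcdA n d + d * Nat.gcdB n d := by
    have := Nat.gcd_eq_gcd_ab n d
    rwa [hcop, Nat.cast_one] at this
  have hxd : x ^ (d : ℤ) = 1 := by
    exact_mod_cast pow_orderOf_eq_one x
  have : x = (x ^ (n : ℤ)) ^ Nat.gcdA n d := by
    calc x = x ^ (1 : ℤ) := (zpow_one x).symm
    _ = x ^ ((n : ℤ) * Nat.gcdA n d + (d : ℤ) * Nat.gcdB n d) := by rw [← hbez]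
    _ = (x ^ (n : ℤ)) ^ Nat.gcdA n d * (x ^ (d : ℤ)) ^ Nat.gcdB n d := by
        rw [zpow_add, zpow_mul, zpow_mul]
    _ = (x ^ (n : ℤ)) ^ Nat.gcdA n d := by rw [hxd, one_zpow, mul_one]
  show x ∈ H
  rw [this]
  exact Subgroup.zpow_mem H (by exact_mod_cast hxn) _
end

section
/- Let G be a finite solvable group and M ≤ G a maximal subgroup. If M is exponential in G, then M is normal in G. -/
namespace Subgroup

variable {G H : Type*} [Group G] [Group H]

theorem isCoatom_map_of_surjective {f : G →* H} (hf : Function.Surjective f) {K : Subgroup G}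
    (hker : f.ker ≤ K) (hK : IsCoatom K) : IsCoatom (K.map f) := by
  refine ⟨fun htop => hK.1 ?_, fun L hL => ?_⟩
  · rw [← comap_map_eq_self hker, htop, comap_top]
  · have hlt : K < L.comap f := by
      rwa [← comap_map_eq_self hker, comap_lt_comap_of_surjective hf]
    rw [← map_comap_eq_self_of_surjective hf L, hK.2 _ hlt, map_top_of_surjective f hf]

theorem eq_bot_of_le_of_normalCore_eq_bot {K N : Subgroup G} (hK : K.normalCore = ⊥) [N.Normal]
    (hNK : N ≤ K) : N = ⊥ :=
  le_bot_iff.mp (hK ▸ normal_le_normalCore.mpr hNK)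

theorem normalCore_map_mk'_normalCore (K : Subgroup G) :
    (K.map (QuotientGroup.mk' K.normalCore)).normalCore = ⊥ := by
  set π := QuotientGroup.mk' K.normalCore
  have hker : π.ker ≤ K := (QuotientGroup.ker_mk' _).trans_le K.normalCore_le
  have hpull : (K.map π).normalCore.comap π ≤ K.normalCore :=
    normal_le_normalCore.mpr ((comap_mono (normalCore_le _)).trans (comap_map_eq_self hker).le)
  rw [← map_comap_eq_self_of_surjective (QuotientGroup.mk'_surjective _) (K.map π).normalCore,
    eq_bot_iff, map_le_iff_le_comap, MonoidHom.comap_bot, QuotientGroup.ker_mk']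
  exact hpull

end Subgroup

open Subgroup

theorem Group.IsSolvable.exists_normal_ne_bot_le_centralizer (G : Type*) [Group G] [Finite G]
    [Group.IsSolvable G] [Nontrivial G] :
    ∃ A : Subgroup G, A.Normal ∧ A ≠ ⊥ ∧ A ≤ centralizer A := by
  obtain ⟨A, ⟨hA, hAbot⟩, hmin⟩ :=
    exists_minimal_of_wellFoundedLT (fun A : Subgroup G => A.Normal ∧ A ≠ ⊥)
      ⟨⊤, inferInstance, top_ne_bot⟩
  refine ⟨A, hA, hAbot, commutator_eq_bot_iff_le_centralizer.mp ?_⟩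
  by_contra hne
  have hlt := Group.IsSolvable.commutator_lt_of_ne_bot hAbot
  exact hlt.not_ge (hmin ⟨commutator_normal A A, hne⟩ hlt.le)

theorem Subgroup.exists_normal_isPGroup_le_of_le_centralizer {G : Type*} [Group G] [Finite G]
    {A : Subgroup G} [hA : A.Normal] (hAcomm : A ≤ centralizer A) {p : ℕ} [Fact p.Prime]
    (hp : p ∣ Nat.card A) :
    ∃ N : Subgroup G, N.Normal ∧ N ≠ ⊥ ∧ N ≤ A ∧ IsPGroup p N := by
  let N : Subgroup G :=
    { carrier := {g | g ∈ A ∧ g ^ p = 1}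
      one_mem' := ⟨A.one_mem, one_pow p⟩
      mul_mem' := fun {a b} ha hb => ⟨A.mul_mem ha.1 hb.1, by
        rw [Commute.mul_pow (mem_centralizer_iff.mp (hAcomm hb.1) a ha.1), ha.2, hb.2, one_mul]⟩
      inv_mem' := fun {a} ha => ⟨A.inv_mem ha.1, by rw [inv_pow, ha.2, inv_one]⟩ }
  have hN : N.Normal :=
    ⟨fun a ha g => ⟨hA.conj_mem a ha.1 g, by rw [conj_pow, ha.2, mul_one, mul_inv_cancel]⟩⟩
  refine ⟨N, hN, ?_, fun g hg => hg.1, fun g => ⟨1, Subtype.ext (by simpa using g.2.2)⟩⟩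
  obtain ⟨x, hx⟩ := exists_prime_orderOf_dvd_card' p hp
  have hxp : (x : G) ^ p = 1 := by rw [← hx, ← Subgroup.orderOf_coe, pow_orderOf_eq_one]
  refine ne_bot_iff_exists_ne_one.mpr ⟨⟨x, x.2, hxp⟩, fun h1 => ?_⟩
  have : x = 1 := Subtype.ext (congrArg (fun y : N => (y : G)) h1)
  exact (Fact.out : p.Prime).one_lt.ne' (by rw [← hx, this, orderOf_one])

namespace IsExponential

variable {G : Type*} [Group G] {M : Subgroup G}

theorem map {H : Type*} [Group H] (hM : IsExponential M) {f : G →* H}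
    (hf : Function.Surjective f) (hker : f.ker ≤ M) : IsExponential (M.map f) := by
  rw [IsExponential, index_map_eq M hf hker]
  refine ⟨hM.1, fun y => ?_⟩
  obtain ⟨x, rfl⟩ := hf y
  rw [← map_pow]
  exact mem_map_of_mem f (hM.2 x)

theorem pow_index_mem_centralizer (hM : IsExponential M) {N : Subgroup G} [N.Normal]
    (hNM : N ⊓ M = ⊥) (g : G) : g ^ M.index ∈ centralizer N := by
  set n := M.index
  refine mem_centralizer_iff.mpr fun w hw => ?_
  have hmodN : (w * g) ^ n / g ^ n ∈ N := by
    rw [← QuotientGroup.eq_iff_div_mem, QuotientGroup.mk_pow, QuotientGroup.mk_pow,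
      QuotientGroup.mk_mul, (QuotientGroup.eq_one_iff w).mpr hw, one_mul]
  have hmodM : (w * g) ^ n / g ^ n ∈ M := M.div_mem (hM.2 _) (hM.2 g)
  have hpow : (w * g) ^ n = g ^ n := by
    rw [← div_eq_one, ← mem_bot, ← hNM]
    exact ⟨hmodN, hmodM⟩
  have hcomm : w * g * g ^ n = g ^ n * (w * g) := by
    rw [← hpow, pow_mul_comm']
  rw [mul_assoc, ← pow_succ', pow_succ, ← mul_assoc, ← mul_assoc] at hcomm
  exact mul_right_cancel hcomm

theorem isPGroup_of_normalCore_eq_bot [Finite G] (hM : IsExponential M) (hmax : IsCoatom M)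
    (hcore : M.normalCore = ⊥) {N : Subgroup G} [N.Normal] (hN : N ≠ ⊥)
    (hNcomm : N ≤ centralizer N) {p : ℕ} [Fact p.Prime] (hNp : IsPGroup p N) :
    IsPGroup p G := by
  have hsup : N ⊔ M = ⊤ := by
    rw [sup_comm, ← codisjoint_iff]
    exact hmax.not_le_iff_codisjoint.mp fun hNM =>
      hN (eq_bot_of_le_of_normalCore_eq_bot hcore hNM)
  set C := centralizer N ⊓ M
  have hCnormal : C.Normal := by
    have hNC : N ≤ normalizer C :=
      (le_centralizer_iff.mp inf_le_left).trans (centralizer_le_normalizer _)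
    have hMC : M ≤ normalizer C :=
      (le_inf le_normalizer_of_normal M.le_normalizer).trans inf_normalizer_le_normalizer_inf
    exact normalizer_eq_top_iff.mp (top_le_iff.mp (hsup ▸ sup_le hNC hMC))
  have hC : C = ⊥ := eq_bot_of_le_of_normalCore_eq_bot hcore inf_le_right
  have hinf : N ⊓ M = ⊥ := eq_bot_iff.mpr (hC ▸ inf_le_inf_right M hNcomm)
  have hindex : M.index = Nat.card N := (isComplement'_of_disjoint_and_mul_eq_univ
    (disjoint_iff.mpr hinf) (by rw [← normal_mul, hsup, coe_top])).index_eq_card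
  obtain ⟨k, hk⟩ := IsPGroup.iff_card.mp hNp
  refine isPGroup_iff_pow_pow_eq_one.mpr fun g => ⟨k, ?_⟩
  rw [← hk, ← hindex, ← mem_bot, ← hC]
  exact ⟨hM.pow_index_mem_centralizer hinf g, hM.2 g⟩

end IsExponential

/-- An exponential maximal subgroup of a finite solvable group is normal.
(`IsCoatom M` says `M` is maximal among proper subgroups.) -/
theorem normal_of_isExponential_maximal {G : Type*} [Group G] [Finite G] [Group.IsSolvable G]
    (M : Subgroup G) (hmax : IsCoatom M) (hexp : IsExponential M) :
    M.Normal := by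
  set π := QuotientGroup.mk' M.normalCore
  have hπ : Function.Surjective π := QuotientGroup.mk'_surjective _
  have hker : π.ker ≤ M := (QuotientGroup.ker_mk' _).trans_le M.normalCore_le
  set M' := M.map π
  have hmax' : IsCoatom M' := isCoatom_map_of_surjective hπ hker hmax
  have : Nontrivial (G ⧸ M.normalCore) := nontrivial_iff.mp (nontrivial_of_ne _ _ hmax'.1)
  obtain ⟨A, hA, hAbot, hAcomm⟩ :=
    Group.IsSolvable.exists_normal_ne_bot_le_centralizer (G ⧸ M.normalCore)
  obtain ⟨p, hp, hpA⟩ := Nat.exists_prime_and_dvd (fun h => hAbot (card_eq_one.mp h))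
  have : Fact p.Prime := ⟨hp⟩
  obtain ⟨N, hN, hNbot, hNA, hNp⟩ := exists_normal_isPGroup_le_of_le_centralizer hAcomm hpA
  have hNcomm : N ≤ centralizer N := (hNA.trans hAcomm).trans (centralizer_le hNA)
  have hpG : IsPGroup p (G ⧸ M.normalCore) := (hexp.map hπ hker).isPGroup_of_normalCore_eq_bot
    hmax' (normalCore_map_mk'_normalCore M) hNbot hNcomm hNp
  have := hpG.isNilpotent
  have hM' : M'.Normal :=
    NormalizerCondition.normal_of_coatom M' Group.normalizerCondition_of_isNilpotent hmax'
  simpa only [M', comap_map_eq_self hker] using hM'.comap π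
end

section
/- Let G be a group and H, M subgroups with H ≤ M ≤ G. If H is exponential in M and M is exponential in G, then H is exponential in G. -/
/-- If `H ≤ M ≤ G`, `H` is exponential in `M`, and `M` is exponential in `G`,
then `H` is exponential in `G`. -/
theorem isExponential_trans {G : Type*} [Group G] (H M : Subgroup G) (hHM : H ≤ M)
    (h1 : IsExponential (H.subgroupOf M)) (h2 : IsExponential M) :
    IsExponential H := by
  obtain ⟨h1i, h1p⟩ := h1
  obtain ⟨h2i, h2p⟩ := h2
  have hrel : (H.subgroupOf M).index = H.relIndex M := rfl
  have key : H.relIndex M * M.index = H.index := Subgroup.relIndex_mul_index hHM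
  constructor
  · rw [← key]
    exact Nat.mul_ne_zero (hrel ▸ h1i) h2i
  · intro x
    have hxM : x ^ M.index ∈ M := h2p x
    have := h1p ⟨x ^ M.index, hxM⟩
    rw [hrel] at this
    have h' : ((⟨x ^ M.index, hxM⟩ : M) ^ H.relIndex M : M).1 ∈ H := this
    rw [← key, mul_comm, pow_mul]
    simpa using h'
end

section
/- Let G be a group and H, K subgroups that are both exponential in G. Then H ∩ K is exponential in G. -/
/-- The intersection of two exponential subgroups is exponential. -/
theorem isExponential_inf {G : Type*} [Group G] (H K : Subgroup G)
    (hH : IsExponential H) (hK : IsExponential K) :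
    IsExponential (H ⊓ K) := by
  obtain ⟨hH0, hHmem⟩ := hH
  obtain ⟨hK0, hKmem⟩ := hK
  refine ⟨Subgroup.index_inf_ne_zero hH0 hK0, fun x => ?_⟩
  constructor
  · obtain ⟨k, hk⟩ := Subgroup.index_dvd_of_le (inf_le_left : H ⊓ K ≤ H)
    rw [hk, pow_mul]
    exact H.pow_mem (hHmem x) k
  · obtain ⟨k, hk⟩ := Subgroup.index_dvd_of_le (inf_le_right : H ⊓ K ≤ K)
    rw [hk, pow_mul]
    exact K.pow_mem (hKmem x) k
end

section
/- Let G be a group and N a normal subgroup of G. Then for x ∈ G, the coset Nx belongs to S(G/N) if and only if x^{|G:H|} ∈ H for every subgroup H of finite index in G containing N. In particular, if R(G) denotes the finite residual of G, then S(G/R(G)) = S(G)/R(G). -/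
/-- `S(G)` is the set of `x ∈ G` such that `x ^ |G:H| ∈ H` for every finite-index
subgroup `H ≤ G`. -/
def Sset (G : Type*) [Group G] : Set G :=
  {x : G | ∀ H : Subgroup G, H.index ≠ 0 → x ^ H.index ∈ H}

/-- The finite residual `R(G)`: the intersection of all finite-index subgroups of `G`. -/
def finiteResidual (G : Type*) [Group G] : Subgroup G :=
  sInf {H : Subgroup G | H.index ≠ 0}

instance finiteResidual_normal (G : Type*) [Group G] : (finiteResidual G).Normal := by
  constructor
  intro n hn g
  simp only [finiteResidual, Subgroup.mem_sInf, Set.mem_setOf_eq] at hn ⊢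
  intro H hH
  have h2 : (H.comap (MulAut.conj g).toMonoidHom).index ≠ 0 := by
    rw [H.index_comap_of_surjective (MulEquiv.surjective _)]
    exact hH
  have := hn (H.comap (MulAut.conj g).toMonoidHom) h2
  simpa [Subgroup.mem_comap] using this

theorem finiteResidual_le {G : Type*} [Group G] {H : Subgroup G} (hH : H.index ≠ 0) :
    finiteResidual G ≤ H :=
  sInf_le hH

namespace Sset

variable {G Q : Type*} [Group G] [Group Q] {f : G →* Q}

/-- `comap f` is an index-preserving bijection from the subgroups of `Q` onto the subgroups
of `G` containing `ker f`, with inverse `map f`. -/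
theorem map_mem_iff (hf : Function.Surjective f) (x : G) :
    f x ∈ Sset Q ↔ ∀ H : Subgroup G, f.ker ≤ H → H.index ≠ 0 → x ^ H.index ∈ H := by
  constructor
  · intro hx H hker hH
    have hcomap : (H.map f).comap f = H := Subgroup.comap_map_eq_self hker
    have hindex : (H.map f).index = H.index := by
      rw [← Subgroup.index_comap_of_surjective _ hf, hcomap]
    have hpow : f x ^ H.index ∈ H.map f := hindex ▸ hx _ (hindex ▸ hH)
    rwa [← map_pow, ← Subgroup.mem_comap, hcomap] at hpow
  · intro hx K hK
    have hindex : (K.comap f).index = K.index := Subgroup.index_comap_of_surjective _ hf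
    have hpow := hx (K.comap f) (f.ker_le_comap K) (hindex ▸ hK)
    rwa [hindex, Subgroup.mem_comap, map_pow] at hpow

theorem preimage_eq_of_ker_le_finiteResidual (hf : Function.Surjective f)
    (hker : f.ker ≤ finiteResidual G) : f ⁻¹' Sset Q = Sset G := by
  ext x
  rw [Set.mem_preimage, map_mem_iff hf]
  exact forall_congr' fun H ↦
    ⟨fun hx hH ↦ hx (hker.trans (finiteResidual_le hH)) hH, fun hx _ ↦ hx⟩

theorem eq_image_of_ker_le_finiteResidual (hf : Function.Surjective f)
    (hker : f.ker ≤ finiteResidual G) : Sset Q = f '' Sset G := by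
  rw [← preimage_eq_of_ker_le_finiteResidual hf hker, Set.image_preimage_eq _ hf]

end Sset

/-- For `N ⊴ G`, the coset `Nx` lies in `S(G/N)` iff `x ^ |G:H| ∈ H` for every
finite-index subgroup `H ≤ G` containing `N`.  In particular,
`S(G / R(G)) = S(G) / R(G)` (the image of `S(G)` in the quotient). -/
theorem mem_sSet_quotient_iff {G : Type*} [Group G] (N : Subgroup G) [N.Normal] :
    (∀ x : G, (x : G ⧸ N) ∈ Sset (G ⧸ N) ↔
      ∀ H : Subgroup G, N ≤ H → H.index ≠ 0 → x ^ H.index ∈ H) ∧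
    Sset (G ⧸ finiteResidual G) = QuotientGroup.mk '' Sset G := by
  constructor
  · intro x
    simpa only [QuotientGroup.ker_mk', QuotientGroup.mk'_apply] using
      Sset.map_mem_iff (QuotientGroup.mk'_surjective N) x
  · exact Sset.eq_image_of_ker_le_finiteResidual (QuotientGroup.mk'_surjective _)
      (QuotientGroup.ker_mk' _).le
end

section
/- Let G be a group. The following are equivalent: (A) G = S(G); (B) every subgroup of finite index of G is exponential in G; (C) every finite quotient of G is nilpotent; (D) every subgroup of finite index of G is subnormal in G. -/
section

variable {G : Type*} [Group G]

theorem sSet_eq_univ_iff :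
    Sset G = Set.univ ↔ ∀ H : Subgroup G, H.index ≠ 0 → ∀ x : G, x ^ H.index ∈ H := by
  simp only [Set.eq_univ_iff_forall, Sset, Set.mem_ofPred_eq]
  exact ⟨fun h H hH x => h x H hH, fun h x H hH => h H hH x⟩

theorem sSet_eq_univ_of_surjective {Q : Type*} [Group Q] {f : G →* Q}
    (hf : Function.Surjective f) (hG : Sset G = Set.univ) : Sset Q = Set.univ := by
  rw [sSet_eq_univ_iff] at hG ⊢
  intro H hH y
  obtain ⟨x, rfl⟩ := hf y
  have hindex : (H.comap f).index = H.index := H.index_comap_of_surjective hf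
  simpa [hindex] using hG (H.comap f) (hindex ▸ hH) x

theorem isSubnormal_iff_subgroup_isSubnormal {H : Subgroup G} :
    IsSubnormal H ↔ H.IsSubnormal := by
  constructor
  · rintro ⟨n, c, rfl, hlast, hstep⟩
    refine Fin.reverseInduction (motive := fun k => (c k).IsSubnormal) ?_ ?_ 0
    · exact hlast ▸ .top
    · exact fun i hi => .step _ _ (hstep i).1 hi (hstep i).2
  · intro hH
    induction hH with
    | top => exact ⟨0, fun _ => ⊤, rfl, rfl, fun i => i.elim0⟩
    | step H K hle _ hN ih =>
      obtain ⟨n, c, rfl, hlast, hstep⟩ := ih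
      refine ⟨n + 1, Fin.cons H c, rfl, by simpa using hlast, Fin.cases ⟨hle, hN⟩ fun i => ?_⟩
      rw [← Fin.succ_castSucc, Fin.cons_succ, Fin.cons_succ]
      exact hstep i

theorem pow_index_mem_of_normal_subgroupOf {H K : Subgroup G} (hle : H ≤ K)
    [(H.subgroupOf K).Normal] {x : G} (hx : x ^ K.index ∈ K) : x ^ H.index ∈ H := by
  have h := (H.subgroupOf K).pow_index_mem ⟨_, hx⟩
  rw [Subgroup.mem_subgroupOf, Subgroup.coe_pow, ← pow_mul] at h
  rwa [← Subgroup.relIndex_mul_index hle, mul_comm]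

theorem Subgroup.IsSubnormal.pow_index_mem {H : Subgroup G} (hH : H.IsSubnormal) (x : G) :
    x ^ H.index ∈ H := by
  induction hH with
  | top => exact Subgroup.mem_top _
  | step H K hle _ _ ih => exact pow_index_mem_of_normal_subgroupOf hle ih

theorem Subgroup.normal_sup_upperCentralSeries_subgroupOf_succ (H : Subgroup G) (k : ℕ) :
    ((H ⊔ upperCentralSeries G k).subgroupOf (H ⊔ upperCentralSeries G (k + 1))).Normal := by
  refine normal_subgroupOf_of_le_normalizer (sup_le (le_sup_left.trans le_normalizer) ?_)
  intro z hz
  rw [mem_normalizer_iff]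
  intro x
  have hcomm : z * x * z⁻¹ * x⁻¹ ∈ H ⊔ upperCentralSeries G k := mem_sup_right (hz x)
  rw [show z * x * z⁻¹ = z * x * z⁻¹ * x⁻¹ * x by group, mul_mem_cancel_left hcomm]

theorem Group.IsNilpotent.isSubnormal [Group.IsNilpotent G] (H : Subgroup G) : H.IsSubnormal := by
  obtain ⟨n, hn⟩ := Group.IsNilpotent.nilpotent G
  have hsup : ∀ k ≤ n, (H ⊔ Subgroup.upperCentralSeries G k).IsSubnormal := fun k hk =>
    Nat.decreasingInduction (motive := fun k _ => (H ⊔ Subgroup.upperCentralSeries G k).IsSubnormal)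
      (fun k _ ih => .step _ _ (sup_le_sup_left (Subgroup.upperCentralSeries_mono G k.le_succ) H) ih
        (H.normal_sup_upperCentralSeries_subgroupOf_succ k))
      (by simp [hn]) hk
  simpa using hsup 0 n.zero_le

theorem IsPGroup.le_of_forall_pow_mem {p n : ℕ} [Fact p.Prime] {P H : Subgroup G}
    (hP : IsPGroup p P) (hn : ¬p ∣ n) (hH : ∀ x : G, x ^ n ∈ H) : P ≤ H := by
  intro x hx
  have hcop : p.Coprime n := (Nat.Prime.coprime_iff_not_dvd Fact.out).2 hn
  obtain ⟨y, hy⟩ := (hP.powEquiv hcop).surjective ⟨x, hx⟩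
  have hxy : (y : G) ^ n = x := congrArg Subtype.val hy
  exact hxy ▸ hH y

theorem Sylow.normal_of_sSet_eq_univ [Finite G] (hG : Sset G = Set.univ) {p : ℕ} [Fact p.Prime]
    (P : Sylow p G) : (P : Subgroup G).Normal := by
  set N := Subgroup.normalizer (P : Set G)
  have hN : ¬p ∣ N.index := fun h =>
    P.not_dvd_index (h.trans (Subgroup.index_dvd_of_le Subgroup.le_normalizer))
  have hle : ∀ R : Sylow p G, (R : Subgroup G) ≤ N := fun R =>
    R.isPGroup'.le_of_forall_pow_mem hN
      (sSet_eq_univ_iff.1 hG N Subgroup.index_ne_zero_of_finite)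
  rw [← Subgroup.normalizer_eq_top_iff, eq_top_iff]
  intro g _
  have hgP : ((g • P : Sylow p G) : Subgroup G) ≤ P := by
    rw [← inf_eq_left, ← (g • P).isPGroup'.inf_normalizer_sylow P, inf_eq_left]
    exact hle (g • P)
  exact Sylow.smul_eq_iff_mem_normalizer.1 (Sylow.ext ((g • P).is_maximal' P.isPGroup' hgP).symm)

theorem Group.isNilpotent_of_sSet_eq_univ [Finite G] (hG : Sset G = Set.univ) :
    Group.IsNilpotent G := by
  refine (Group.isNilpotent_of_finite_tfae.out 0 3).2 ?_
  intro p _ P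
  exact Sylow.normal_of_sSet_eq_univ hG P

theorem Subgroup.isSubnormal_of_isNilpotent_quotient
    (hG : ∀ (N : Subgroup G) [N.Normal], N.index ≠ 0 → Group.IsNilpotent (G ⧸ N))
    {H : Subgroup G} (hH : H.index ≠ 0) : H.IsSubnormal := by
  have : H.FiniteIndex := ⟨hH⟩
  have : Group.IsNilpotent (G ⧸ H.normalCore) := hG _ FiniteIndex.index_ne_zero
  have hcomap : (H.map (QuotientGroup.mk' H.normalCore)).comap (QuotientGroup.mk' _) = H := by
    rw [comap_map_eq, QuotientGroup.ker_mk', sup_of_le_left H.normalCore_le]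
  exact hcomap ▸ (Group.IsNilpotent.isSubnormal _).comap _

end

/-- The following are equivalent for a group `G`:
(A) `G = S(G)`;
(B) every finite-index subgroup of `G` is exponential;
(C) every finite quotient of `G` is nilpotent;
(D) every finite-index subgroup of `G` is subnormal. -/
theorem sSet_eq_univ_tfae {G : Type*} [Group G] :
    ((Sset G = Set.univ) ↔ (∀ H : Subgroup G, H.index ≠ 0 → IsExponential H)) ∧
    ((Sset G = Set.univ) ↔
      (∀ (N : Subgroup G) [N.Normal], N.index ≠ 0 → Group.IsNilpotent (G ⧸ N))) ∧
    ((Sset G = Set.univ) ↔ (∀ H : Subgroup G, H.index ≠ 0 → IsSubnormal H)) := by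
  have hAB : Sset G = Set.univ ↔ ∀ H : Subgroup G, H.index ≠ 0 → IsExponential H := by
    rw [sSet_eq_univ_iff]
    exact forall₂_congr fun H hH => ⟨fun h => ⟨hH, h⟩, And.right⟩
  have hAC (hA : Sset G = Set.univ) (N : Subgroup G) [N.Normal] (hN : N.index ≠ 0) :
      Group.IsNilpotent (G ⧸ N) :=
    have : N.FiniteIndex := ⟨hN⟩
    Group.isNilpotent_of_sSet_eq_univ
      (sSet_eq_univ_of_surjective (QuotientGroup.mk'_surjective N) hA)
  have hCD (hC : ∀ (N : Subgroup G) [N.Normal], N.index ≠ 0 → Group.IsNilpotent (G ⧸ N))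
      (H : Subgroup G) (hH : H.index ≠ 0) : IsSubnormal H :=
    isSubnormal_iff_subgroup_isSubnormal.2 (Subgroup.isSubnormal_of_isNilpotent_quotient hC hH)
  have hDA (hD : ∀ H : Subgroup G, H.index ≠ 0 → IsSubnormal H) : Sset G = Set.univ :=
    sSet_eq_univ_iff.2 fun H hH =>
      (isSubnormal_iff_subgroup_isSubnormal.1 (hD H hH)).pow_index_mem
  exact ⟨hAB, ⟨hAC, hDA ∘ hCD⟩, ⟨hCD ∘ hAC, hDA⟩⟩
end
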